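/- The transformation T defined almost everywhere on the Bernoulli shift space ({-1,1}^ℤ, μ) by (Tω)_n = y_n − y_{n−1}, where y = 2s − x, x is the two-sided simple random walk determined by ω, and s_n = sup_{m≤n} x_m, is measure preserving: μ ∘ T⁻¹ = μ. -/

import Mathlib

/-!
Let `q n = s n - x n`. Where `s 0 < ∞` (almost surely, by the strong law of large numbers), `q`
obeys Lindley's recursion `q n = max (q (n-1) - ω n) 0`, and `(Tω) n = 2 (q n - q (n-1)) + ω n`
are the departures of this queue. The shift preserves `μ`, so `q n` has a law `ρ` not depending
on `n`; the recursion gives global balance for `ρ`, hence detailed balance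
`p ρ (j+1) = (1-p) ρ j`. With detailed balance one checks by hand that if `q (n-1)` has law `c ρ`
on an event of the past, then `((Tω) n, q n)` has law `c (ν ⊗ ρ)` on it, `ν` the law of one
coordinate (Burke's output theorem, one step). Induction along intervals gives
`μ (T⁻¹ B) = μ B` for every finite box `B`, and boxes determine the measure.
-/

open MeasureTheory ProbabilityTheory Filter Set

noncomputable section

/-- The two-sided simple random walk determined by `ω : ℤ → ℤ`:
`x 0 = 0`, `x n = x (n-1) + ω n` for `n > 0`, `x n = x (n+1) - ω (n+1)` for `n < 0`. -/
def walk (ω : ℤ → ℤ) (n : ℤ) : ℤ :=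
  if 0 ≤ n then ∑ k ∈ Finset.Ioc 0 n, ω k else -∑ k ∈ Finset.Ioc n 0, ω k

/-- `s n = sup_{m ≤ n} x m` (junk value if the set is unbounded above). -/
def runMax (ω : ℤ → ℤ) (n : ℤ) : ℤ := sSup (walk ω '' Set.Iic n)

/-- `Ω' = {ω : s₀(ω) < ∞}`. -/
def goodSet : Set (ℤ → ℤ) := {ω | BddAbove (walk ω '' Set.Iic 0)}

/-- `y n = 2 s n - x n - 2 s 0`. -/
def ypath (ω : ℤ → ℤ) (n : ℤ) : ℤ := 2 * runMax ω n - walk ω n - 2 * runMax ω 0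

/-- The transformation `T`, `(Tω)ₙ = yₙ - yₙ₋₁`. -/
def burkeT (ω : ℤ → ℤ) (n : ℤ) : ℤ := ypath ω n - ypath ω (n - 1)

/-- Time reversal `(Rω)ₙ = ω₋ₙ`. -/
def rev (ω : ℤ → ℤ) (n : ℤ) : ℤ := ω (-n)

/-- The `k`-th iterate of `T` for `k ∈ ℤ`, with `T⁻¹ = R ∘ T ∘ R` used for negative `k`. -/
def burkeTiter (k : ℤ) (ω : ℤ → ℤ) : ℤ → ℤ :=
  if 0 ≤ k then burkeT^[k.toNat] ω else (rev ∘ burkeT ∘ rev)^[(-k).toNat] ω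

/-- The hypothesis that `μ` is the Bernoulli product measure on `{-1,1}^ℤ ⊆ ℤ^ℤ`
with `μ {ω : ωₙ = 1} = p`. -/
def IsBernoulliProduct (μ : Measure (ℤ → ℤ)) (p : ℝ) : Prop :=
  IsProbabilityMeasure μ ∧
    iIndepFun (fun (n : ℤ) (ω : ℤ → ℤ) => ω n) μ ∧
    (∀ n : ℤ, μ {ω | ω n = 1} = ENNReal.ofReal p) ∧
    (∀ n : ℤ, μ {ω | ω n = -1} = ENNReal.ofReal (1 - p))

open scoped ENNReal

namespace Burke

lemma sum_Ioc_add_sum_Ioc (ω : ℤ → ℤ) {a b c : ℤ} (hab : a ≤ b) (hbc : b ≤ c) :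
    ∑ i ∈ Finset.Ioc a b, ω i + ∑ i ∈ Finset.Ioc b c, ω i = ∑ i ∈ Finset.Ioc a c, ω i := by
  rw [← Finset.sum_union (Finset.Ioc_disjoint_Ioc_of_le le_rfl),
    Finset.Ioc_union_Ioc_eq_Ioc hab hbc]

lemma walk_sub_walk (ω : ℤ → ℤ) {k n : ℤ} (hkn : k ≤ n) :
    walk ω n - walk ω k = ∑ i ∈ Finset.Ioc k n, ω i := by
  unfold walk
  rcases le_or_gt 0 k with h0k | hk0
  · rw [if_pos (h0k.trans hkn), if_pos h0k, ← sum_Ioc_add_sum_Ioc ω h0k hkn]; ring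
  rcases le_or_gt 0 n with h0n | hn0
  · rw [if_pos h0n, if_neg hk0.not_ge, ← sum_Ioc_add_sum_Ioc ω hk0.le h0n]; ring
  · rw [if_neg hn0.not_ge, if_neg hk0.not_ge, ← sum_Ioc_add_sum_Ioc ω hkn hn0.le]; ring

lemma walk_sub_walk_sub_one (ω : ℤ → ℤ) (n : ℤ) : walk ω n - walk ω (n - 1) = ω n := by
  rw [walk_sub_walk ω (by omega), show Finset.Ioc (n - 1) n = {n} by ext; simp; omega,
    Finset.sum_singleton]

/-- `s n - x n`, written through the increments `ω i`, `k < i ≤ n`, so that it visibly depends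
only on the coordinates up to time `n`; `ℕ`-valued since it is nonnegative on `goodSet`. -/
def queue (ω : ℤ → ℤ) (n : ℤ) : ℕ :=
  (sSup ((fun k => -∑ i ∈ Finset.Ioc k n, ω i) '' Set.Iic n)).toNat

/-- `T ω` rebuilt from `queue`, so that it depends only on the coordinates up to time `n`. -/
def output (ω : ℤ → ℤ) (n : ℤ) : ℤ := 2 * ((queue ω n : ℤ) - queue ω (n - 1)) + ω n

variable {ω : ℤ → ℤ}

lemma bddAbove_walk_image_Iic (h : ω ∈ goodSet) (n : ℤ) : BddAbove (walk ω '' Set.Iic n) := by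
  refine (h.union ((Set.finite_Icc 0 n).image (walk ω)).bddAbove).mono ?_
  rw [← Set.image_union]
  exact Set.image_mono fun k (hk : k ≤ n) => by
    rcases le_or_gt k 0 with hk0 | hk0
    exacts [Or.inl hk0, Or.inr ⟨hk0.le, hk⟩]

lemma walk_neg_natCast (ω : ℤ → ℤ) (n : ℕ) : walk ω (-n) = -∑ i ∈ Finset.range n, ω (-i) := by
  induction n with
  | zero => simp [walk]
  | succ n ih =>
    have := walk_sub_walk_sub_one ω (-n)
    rw [Finset.sum_range_succ, Nat.cast_succ, neg_add, ← sub_eq_add_neg]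
    omega

lemma mem_goodSet_of_eventually (h : ∀ᶠ n : ℕ in atTop, walk ω (-n) ≤ 0) :
    ω ∈ goodSet := by
  obtain ⟨N, hN⟩ := eventually_atTop.1 h
  refine ((((Set.finite_Icc (-(N : ℤ)) 0).image (walk ω)).bddAbove).union
    (bddAbove_Iic (a := 0))).mono ?_
  rintro _ ⟨k, hk, rfl⟩
  by_cases hkN : -(N : ℤ) ≤ k
  · exact Or.inl ⟨k, ⟨hkN, hk⟩, rfl⟩
  · have := hN (-k).toNat (by omega)
    rw [Int.toNat_of_nonneg (by omega), neg_neg] at this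
    exact Or.inr this

lemma queue_eq_runMax_sub_walk (h : ω ∈ goodSet) (n : ℤ) :
    (queue ω n : ℤ) = runMax ω n - walk ω n := by
  have hset : (fun k => -∑ i ∈ Finset.Ioc k n, ω i) '' Set.Iic n =
      OrderIso.addRight (-walk ω n) '' (walk ω '' Set.Iic n) := by
    rw [Set.image_image]
    refine Set.image_congr fun k (hk : k ≤ n) => ?_
    simp [← walk_sub_walk ω hk, sub_eq_add_neg]
  have hne : (walk ω '' Set.Iic n).Nonempty := ⟨_, Set.mem_image_of_mem _ (le_refl n)⟩
  have hle : walk ω n ≤ runMax ω n :=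
    le_csSup (bddAbove_walk_image_Iic h n) (Set.mem_image_of_mem _ (le_refl n))
  rw [queue, hset, ← OrderIso.map_csSup' _ hne (bddAbove_walk_image_Iic h n)]
  simp only [OrderIso.addRight_apply, ← sub_eq_add_neg]
  exact Int.toNat_of_nonneg (by rw [runMax] at hle; omega)

lemma runMax_eq_max (h : ω ∈ goodSet) (n : ℤ) :
    runMax ω n = max (runMax ω (n - 1)) (walk ω n) := by
  have hIic : Set.Iic n = insert n (Set.Iic (n - 1)) := by
    ext k; simp only [Set.mem_Iic, Set.mem_insert_iff]; omega
  rw [runMax, hIic, Set.image_insert_eq, csSup_insert (bddAbove_walk_image_Iic h _)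
    ⟨_, Set.mem_image_of_mem _ (le_refl (n - 1))⟩, sup_comm]
  rfl

lemma queue_eq_max (h : ω ∈ goodSet) (n : ℤ) :
    (queue ω n : ℤ) = max ((queue ω (n - 1) : ℤ) - ω n) 0 := by
  have := runMax_eq_max h n
  have := walk_sub_walk_sub_one ω n
  rw [queue_eq_runMax_sub_walk h, queue_eq_runMax_sub_walk h]
  omega

lemma burkeT_eq_output (h : ω ∈ goodSet) (n : ℤ) : burkeT ω n = output ω n := by
  have := walk_sub_walk_sub_one ω n
  rw [burkeT, ypath, ypath, output, queue_eq_runMax_sub_walk h, queue_eq_runMax_sub_walk h]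
  omega

def shift (ω : ℤ → ℤ) (n : ℤ) : ℤ := ω (n + 1)

lemma measurable_shift : Measurable shift :=
  measurable_pi_lambda _ fun n => measurable_pi_apply (n + 1)

lemma queue_shift (ω : ℤ → ℤ) (n : ℤ) : queue (shift ω) n = queue ω (n + 1) := by
  rw [queue, queue, ← Set.image_add_const_Iic, Set.image_image]
  congr 3
  funext k
  rw [← Finset.map_add_right_Ioc, Finset.sum_map]
  rfl

abbrev past (n : ℤ) : MeasurableSpace (ℤ → ℤ) :=
  ⨆ i ∈ Set.Iic n, MeasurableSpace.comap (fun ω : ℤ → ℤ => ω i) inferInstance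

lemma past_le (n : ℤ) : past n ≤ MeasurableSpace.pi :=
  iSup₂_le fun i _ => (measurable_pi_apply i).comap_le

lemma measurable_past_apply {i n : ℤ} (h : i ≤ n) : Measurable[past n] (fun ω : ℤ → ℤ => ω i) :=
  (comap_measurable _).mono (le_iSup₂ (f := fun i (_ : i ∈ Set.Iic n) =>
    MeasurableSpace.comap (fun ω : ℤ → ℤ => ω i) inferInstance) i h) le_rfl

lemma measurable_queue_past {m n : ℤ} (h : m ≤ n) : Measurable[past n] (queue · m) := by
  simp_rw [queue, sSup_image']
  refine (measurable_from_top (f := Int.toNat)).comp (Measurable.iSup fun k => ?_)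
  exact (Finset.measurable_sum _ fun i hi =>
    measurable_past_apply ((Finset.mem_Ioc.1 hi).2.trans h)).neg

lemma measurableSet_queue_eq {m n : ℤ} (h : m ≤ n) (j : ℕ) :
    MeasurableSet[past n] {ω | queue ω m = j} :=
  measurable_queue_past h (measurableSet_singleton j)

lemma measurable_output_past {m n : ℤ} (h : m ≤ n) : Measurable[past n] (output · m) := by
  have hq : ∀ k ≤ n, Measurable[past n] (fun ω => (queue ω k : ℤ)) := fun k hk =>
    (measurable_from_top (f := ((↑) : ℕ → ℤ))).comp (measurable_queue_past hk)
  exact (measurable_const.mul ((hq m h).sub (hq (m - 1) (by omega)))).add (measurable_past_apply h)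

lemma measurableSet_forall_output_mem {s : Finset ℤ} {n : ℤ} (hs : ∀ i ∈ s, i ≤ n)
    (t : ℤ → Set ℤ) : MeasurableSet[past n] {ω | ∀ i ∈ s, output ω i ∈ t i} := by
  have h : {ω | ∀ i ∈ s, output ω i ∈ t i} = ⋂ i ∈ s, (output · i) ⁻¹' t i := by ext; simp
  rw [h]
  exact Finset.measurableSet_biInter _ fun i hi => measurable_output_past (hs i hi) .of_discrete

lemma measurable_queue (n : ℤ) : Measurable (queue · n) :=
  (measurable_queue_past le_rfl).mono (past_le n) le_rfl

lemma measurable_output (n : ℤ) : Measurable (output · n) :=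
  (measurable_output_past le_rfl).mono (past_le n) le_rfl

lemma measurable_burkeT : Measurable burkeT := by
  have hwalk : ∀ n, Measurable (walk · n) := fun n => by
    unfold walk
    split
    · exact Finset.measurable_sum _ fun i _ => measurable_pi_apply i
    · exact (Finset.measurable_sum _ fun i _ => measurable_pi_apply i).neg
  have hmax : ∀ n, Measurable (runMax · n) := fun n => by
    simp_rw [runMax, sSup_image']
    exact Measurable.iSup fun k => hwalk k
  refine measurable_pi_lambda _ fun n => ?_
  simp_rw [burkeT, ypath]
  fun_prop

def coin (p : ℝ) : Measure ℤ :=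
  ENNReal.ofReal p • Measure.dirac 1 + ENNReal.ofReal (1 - p) • Measure.dirac (-1)

lemma coin_singleton_one (p : ℝ) : coin p {1} = ENNReal.ofReal p := by simp [coin]

lemma coin_singleton_neg_one (p : ℝ) : coin p {-1} = ENNReal.ofReal (1 - p) := by simp [coin]

lemma coin_singleton_of_ne {p : ℝ} {e : ℤ} (h1 : e ≠ 1) (h2 : e ≠ -1) : coin p {e} = 0 := by
  simp [coin, Set.indicator, Ne.symm h1, Ne.symm h2]

lemma ofReal_add_ofReal_one_sub {p : ℝ} (h0 : 0 ≤ p) (h1 : p ≤ 1) :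
    ENNReal.ofReal p + ENNReal.ofReal (1 - p) = 1 := by
  simp [← ENNReal.ofReal_add h0 (sub_nonneg.2 h1)]

lemma coin_univ {p : ℝ} (h0 : 0 ≤ p) (h1 : p ≤ 1) : coin p Set.univ = 1 := by
  simp [coin, ofReal_add_ofReal_one_sub h0 h1]

lemma eq_smul_dirac_add_smul_dirac {m : Measure ℤ} (h : ∀ e, e ≠ 1 → e ≠ -1 → m {e} = 0) :
    m = m {1} • Measure.dirac 1 + m {-1} • Measure.dirac (-1) := by
  refine Measure.ext_of_singleton fun e => ?_
  by_cases h1 : e = 1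
  · simp [h1]
  by_cases h2 : e = -1
  · simp [h2]
  simp [h e h1 h2, Ne.symm h1, Ne.symm h2]

lemma integrable_coin (p : ℝ) : Integrable (fun v : ℤ => (v : ℝ)) (coin p) :=
  ((integrable_dirac (by simp)).smul_measure ENNReal.ofReal_ne_top).add_measure
    ((integrable_dirac (by simp)).smul_measure ENNReal.ofReal_ne_top)

lemma integral_coin {p : ℝ} (h0 : 0 ≤ p) (h1 : p ≤ 1) :
    ∫ v, (v : ℝ) ∂coin p = 2 * p - 1 := by
  rw [coin, integral_add_measure ((integrable_dirac (by simp)).smul_measure ENNReal.ofReal_ne_top)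
    ((integrable_dirac (by simp)).smul_measure ENNReal.ofReal_ne_top),
    integral_smul_measure, integral_smul_measure, integral_dirac, integral_dirac,
    ENNReal.toReal_ofReal h0, ENNReal.toReal_ofReal (sub_nonneg.2 h1)]
  simp
  ring

def outputLaw (μ : Measure (ℤ → ℤ)) (A : Set (ℤ → ℤ)) (n : ℤ) (j : ℕ) : Measure ℤ :=
  (μ.restrict (A ∩ {ω | queue ω n = j})).map (output · n)

lemma outputLaw_apply (μ : Measure (ℤ → ℤ)) (A : Set (ℤ → ℤ)) (n : ℤ) (j : ℕ) (E : Set ℤ) :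
    outputLaw μ A n j E = μ (A ∩ {ω | queue ω n = j ∧ output ω n ∈ E}) := by
  rw [outputLaw, Measure.map_apply (measurable_output n) .of_discrete,
    Measure.restrict_apply (measurable_output n .of_discrete)]
  congr 1
  ext ω
  simp only [Set.mem_inter_iff, Set.mem_preimage, Set.mem_ofPred_eq]
  tauto

/-- Global balance for a birth–death chain implies detailed balance. -/
lemma detailed_balance {a b : ℝ≥0∞} (hab : a + b = 1) {F : ℕ → ℝ≥0∞} (hF : ∀ j, F j ≠ ∞)
    (h0 : F 0 = F 0 * a + F 1 * a) (hsucc : ∀ j, F (j + 1) = F j * b + F (j + 2) * a) (j : ℕ) :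
    F (j + 1) * a = F j * b := by
  have ha : a ≠ ∞ := ne_top_of_le_ne_top ENNReal.one_ne_top (hab ▸ le_self_add)
  have hsplit : ∀ j, F j = F j * a + F j * b := fun j => by rw [← mul_add, hab, mul_one]
  induction j with
  | zero =>
    refine ((ENNReal.add_right_inj (ENNReal.mul_ne_top (hF 0) ha)).1 ?_).symm
    rw [← hsplit]
    exact h0
  | succ j ih =>
    refine ((ENNReal.add_right_inj (ENNReal.mul_ne_top (hF (j + 1)) ha)).1 ?_).symm
    rw [← hsplit, ih]
    exact hsucc j

lemma tsum_measure_inter_queue_eq (μ : Measure (ℤ → ℤ)) {A : Set (ℤ → ℤ)} (hA : MeasurableSet A)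
    (n : ℤ) :
    ∑' j : ℕ, μ (A ∩ {ω | queue ω n = j}) = μ A := by
  rw [← measure_iUnion]
  · congr 1
    ext ω
    simp
  · exact fun i j hij => Set.disjoint_left.2 fun ω hi hj => hij (hi.2.symm.trans hj.2)
  · exact fun j => hA.inter (measurable_queue n (measurableSet_singleton j))

end Burke

namespace IsBernoulliProduct

open Burke

variable {p : ℝ} {μ : Measure (ℤ → ℤ)} {n : ℤ} {A : Set (ℤ → ℤ)}

lemma nonneg (hμ : IsBernoulliProduct μ p) : 0 ≤ p := by
  have := hμ.1
  have h := ENNReal.ofReal_le_one.1 (hμ.2.2.2 0 ▸ prob_le_one)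
  linarith

lemma le_one (hμ : IsBernoulliProduct μ p) : p ≤ 1 := by
  have := hμ.1
  exact ENNReal.ofReal_le_one.1 (hμ.2.2.1 0 ▸ prob_le_one)

lemma ae_eq_one_or_neg_one (hμ : IsBernoulliProduct μ p) (n : ℤ) :
    ∀ᵐ ω ∂μ, ω n = 1 ∨ ω n = -1 := by
  have := hμ.1
  have hmeas : ∀ v : ℤ, MeasurableSet {ω : ℤ → ℤ | ω n = v} := fun v =>
    measurableSet_eq_fun (measurable_pi_apply n) measurable_const
  have hdisj : Disjoint {ω : ℤ → ℤ | ω n = 1} {ω | ω n = -1} :=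
    Set.disjoint_left.2 fun ω h1 h2 => by simp_all
  have hone : μ ({ω | ω n = 1} ∪ {ω | ω n = -1}) = 1 := by
    rw [measure_union hdisj (hmeas _), hμ.2.2.1, hμ.2.2.2,
      ofReal_add_ofReal_one_sub hμ.nonneg hμ.le_one]
  exact (prob_compl_eq_zero_iff ((hmeas 1).union (hmeas (-1)))).2 hone

lemma measure_coord_eq (hμ : IsBernoulliProduct μ p) (n v : ℤ) :
    μ {ω | ω n = v} = coin p {v} := by
  by_cases h1 : v = 1
  · rw [h1, hμ.2.2.1, coin_singleton_one]
  by_cases h2 : v = -1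
  · rw [h2, hμ.2.2.2, coin_singleton_neg_one]
  rw [coin_singleton_of_ne h1 h2, measure_eq_zero_iff_ae_notMem]
  filter_upwards [hμ.ae_eq_one_or_neg_one n] with ω hω
  rintro rfl
  tauto

lemma map_eval (hμ : IsBernoulliProduct μ p) (n : ℤ) : μ.map (fun ω => ω n) = coin p :=
  Measure.ext_of_singleton fun v => by
    rw [Measure.map_apply (measurable_pi_apply n) (measurableSet_singleton v)]
    exact hμ.measure_coord_eq n v

lemma measure_pi (hμ : IsBernoulliProduct μ p) (s : Finset ℤ) (t : ℤ → Set ℤ) :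
    μ (Set.pi s t) = ∏ i ∈ s, coin p (t i) := by
  have h := hμ.2.1.measure_inter_preimage_eq_mul s (sets := t) fun i _ => trivial
  have hpi : Set.pi s t = ⋂ i ∈ s, (fun ω : ℤ → ℤ => ω i) ⁻¹' t i := by ext; simp
  rw [hpi, h]
  refine Finset.prod_congr rfl fun i _ => ?_
  rw [← hμ.map_eval i, Measure.map_apply (measurable_pi_apply i) (MeasurableSet.of_discrete)]

lemma eq_of_measure_pi (hμ : IsBernoulliProduct μ p) {ν : Measure (ℤ → ℤ)}
    (hν : ∀ (s : Finset ℤ) (t : ℤ → Set ℤ), ν (Set.pi s t) = ∏ i ∈ s, coin p (t i)) : ν = μ := by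
  have : IsProbabilityMeasure (coin p) := ⟨coin_univ hμ.nonneg hμ.le_one⟩
  exact (Measure.eq_infinitePi _ fun s t _ => hν s t).trans
    (Measure.eq_infinitePi _ fun s t _ => hμ.measure_pi s t).symm

lemma map_shift (hμ : IsBernoulliProduct μ p) : μ.map shift = μ := by
  refine hμ.eq_of_measure_pi fun s t => ?_
  have hpre : shift ⁻¹' Set.pi s t =
      Set.pi (s.map (addRightEmbedding 1)) (fun i => t (i - 1)) := by
    ext ω
    simp only [Set.mem_preimage, Set.mem_pi, Finset.coe_map, Set.mem_image, Finset.mem_coe,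
      addRightEmbedding_apply, shift]
    exact ⟨fun h _ ⟨i, hi, hi'⟩ => by simpa [← hi'] using h i hi,
      fun h i hi => by simpa using h (i + 1) ⟨i, hi, rfl⟩⟩
  rw [Measure.map_apply measurable_shift (.pi s.countable_toSet fun _ _ => .of_discrete), hpre,
    hμ.measure_pi, Finset.prod_map]
  simp

lemma measure_queue_eq (hμ : IsBernoulliProduct μ p) (n : ℤ) (j : ℕ) :
    μ {ω | queue ω n = j} = μ {ω | queue ω 0 = j} := by
  have hstep : ∀ n : ℤ, μ {ω | queue ω (n + 1) = j} = μ {ω | queue ω n = j} := fun n => by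
    conv_rhs => rw [← hμ.map_shift]
    rw [Measure.map_apply measurable_shift
      (measurableSet_eq_fun (measurable_queue n) measurable_const)]
    simp [queue_shift]
  induction n using Int.induction_on with
  | zero => rfl
  | succ n ih => rw [hstep, ih]
  | pred n ih => rw [← ih, ← hstep, sub_add_cancel]

lemma measure_inter_coord_eq_mul (hμ : IsBernoulliProduct μ p)
    (hA : MeasurableSet[past n] A) (v : ℤ) :
    μ (A ∩ {ω | ω (n + 1) = v}) = μ A * μ {ω | ω (n + 1) = v} := by
  have hindep := indep_biSup_compl (fun i => (measurable_pi_apply i).comap_le) hμ.2.1.iIndep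
    (Set.Iic n)
  refine (Indep_iff _ _ μ).1 hindep A _ hA ?_
  exact le_iSup₂ (f := fun i (_ : i ∈ (Set.Iic n)ᶜ) =>
    MeasurableSpace.comap (fun ω : ℤ → ℤ => ω i) inferInstance) (n + 1) (by simp) _
    ⟨{v}, .of_discrete, rfl⟩

/-- By the strong law of large numbers, `x (-n) / n → 1 - 2 p < 0`, so `x` is bounded above on
the negative times. -/
lemma ae_mem_goodSet (hμ : IsBernoulliProduct μ p) (hp : 1 / 2 < p) : ∀ᵐ ω ∂μ, ω ∈ goodSet := by
  have := hμ.1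
  set X : ℕ → (ℤ → ℤ) → ℝ := fun n ω => ω (-n)
  have hcast : Measurable (fun v : ℤ => (v : ℝ)) := measurable_from_top
  have hX : ∀ n, μ.map (X n) = (coin p).map (fun v : ℤ => (v : ℝ)) := fun n => by
    rw [← hμ.map_eval (-n), Measure.map_map hcast (measurable_pi_apply _)]
    rfl
  have hint : Integrable (X 0) μ := by
    have h := integrable_coin p
    rw [← hμ.map_eval 0] at h
    exact (integrable_map_measure hcast.aestronglyMeasurable
      (measurable_pi_apply _).aemeasurable).1 h
  have hindep : Pairwise fun i j => IndepFun (X i) (X j) μ := fun i j hij =>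
    (hμ.2.1.indepFun (by omega : -(i : ℤ) ≠ -j)).comp hcast hcast
  have hident : ∀ n, IdentDistrib (X n) (X 0) μ μ := fun n =>
    ⟨(hcast.comp (measurable_pi_apply _)).aemeasurable,
      (hcast.comp (measurable_pi_apply _)).aemeasurable, by rw [hX, hX]⟩
  have hmean : ∫ ω, X 0 ω ∂μ = 2 * p - 1 := by
    rw [← integral_coin hμ.nonneg hμ.le_one, ← hμ.map_eval 0,
      integral_map (measurable_pi_apply _).aemeasurable hcast.aestronglyMeasurable]
    rfl
  filter_upwards [strong_law_ae_real X hint hindep hident] with ω hω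
  rw [hmean] at hω
  refine mem_goodSet_of_eventually ((hω.eventually (lt_mem_nhds
    (by linarith : (0 : ℝ) < 2 * p - 1))).mono fun n hn => ?_)
  have hsum : ∑ i ∈ Finset.range n, X i ω = ((-walk ω (-n) : ℤ) : ℝ) := by
    simp [X, walk_neg_natCast]
  rw [hsum, div_pos_iff] at hn
  rcases hn with ⟨hn, -⟩ | ⟨-, hn⟩
  · exact_mod_cast (neg_pos.1 (by exact_mod_cast hn)).le
  · exact absurd hn (Nat.cast_nonneg n).not_gt

lemma ae_queue_step (hμ : IsBernoulliProduct μ p) (hp : 1 / 2 < p) (n : ℤ) :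
    ∀ᵐ ω ∂μ, (ω (n + 1) = 1 ∨ ω (n + 1) = -1) ∧
      (queue ω (n + 1) : ℤ) = max ((queue ω n : ℤ) - ω (n + 1)) 0 := by
  filter_upwards [hμ.ae_eq_one_or_neg_one (n + 1), hμ.ae_mem_goodSet hp] with ω hω hgood
  exact ⟨hω, by simpa using queue_eq_max hgood (n + 1)⟩

lemma measure_inter_eq_of_ae_iff (hμ : IsBernoulliProduct μ p) (hA : MeasurableSet[past n] A)
    {X : Set (ℤ → ℤ)} {j : ℕ} {v : ℤ}
    (hX : ∀ᵐ ω ∂μ, ω ∈ X ↔ queue ω n = j ∧ ω (n + 1) = v) :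
    μ (A ∩ X) = μ (A ∩ {ω | queue ω n = j}) * coin p {v} := by
  have hAX : (A ∩ X : Set (ℤ → ℤ)) =ᵐ[μ]
      (A ∩ {ω | queue ω n = j} ∩ {ω | ω (n + 1) = v} : Set (ℤ → ℤ)) := by
    filter_upwards [hX] with ω hω
    exact congrArg (ω ∈ A ∧ ·) (propext hω) |>.trans (propext and_assoc).symm
  rw [measure_congr hAX, hμ.measure_inter_coord_eq_mul
    (hA.inter (measurableSet_queue_eq le_rfl j)), hμ.measure_coord_eq]

lemma outputLaw_singleton_neg_one (hμ : IsBernoulliProduct μ p) (hp : 1 / 2 < p)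
    (hA : MeasurableSet[past n] A) (j : ℕ) :
    outputLaw μ A (n + 1) j {-1} = μ (A ∩ {ω | queue ω n = j + 1}) * ENNReal.ofReal p := by
  rw [outputLaw_apply, ← coin_singleton_one]
  refine hμ.measure_inter_eq_of_ae_iff hA ?_
  filter_upwards [hμ.ae_queue_step hp n] with ω ⟨hv, hq⟩
  simp only [Set.mem_singleton_iff, output, add_sub_cancel_right]
  omega

lemma outputLaw_zero_singleton_one (hμ : IsBernoulliProduct μ p) (hp : 1 / 2 < p)
    (hA : MeasurableSet[past n] A) :
    outputLaw μ A (n + 1) 0 {1} = μ (A ∩ {ω | queue ω n = 0}) * ENNReal.ofReal p := by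
  rw [outputLaw_apply, ← coin_singleton_one]
  refine hμ.measure_inter_eq_of_ae_iff hA ?_
  filter_upwards [hμ.ae_queue_step hp n] with ω ⟨hv, hq⟩
  simp only [Set.mem_singleton_iff, output, add_sub_cancel_right]
  omega

lemma outputLaw_succ_singleton_one (hμ : IsBernoulliProduct μ p) (hp : 1 / 2 < p)
    (hA : MeasurableSet[past n] A) (j : ℕ) :
    outputLaw μ A (n + 1) (j + 1) {1} = μ (A ∩ {ω | queue ω n = j}) * ENNReal.ofReal (1 - p) := by
  rw [outputLaw_apply, ← coin_singleton_neg_one]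
  refine hμ.measure_inter_eq_of_ae_iff hA ?_
  filter_upwards [hμ.ae_queue_step hp n] with ω ⟨hv, hq⟩
  simp only [Set.mem_singleton_iff, output, add_sub_cancel_right]
  omega

lemma outputLaw_eq (hμ : IsBernoulliProduct μ p) (hp : 1 / 2 < p) (j : ℕ) :
    outputLaw μ A (n + 1) j = outputLaw μ A (n + 1) j {1} • Measure.dirac 1 +
      outputLaw μ A (n + 1) j {-1} • Measure.dirac (-1) := by
  refine eq_smul_dirac_add_smul_dirac fun e h1 h2 => ?_
  rw [outputLaw_apply]
  refine measure_mono_null Set.inter_subset_right (measure_eq_zero_iff_ae_notMem.2 ?_)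
  filter_upwards [hμ.ae_queue_step hp n] with ω hω
  simp only [Set.mem_singleton_iff, output, add_sub_cancel_right]
  omega

lemma measure_queue_succ_mul (hμ : IsBernoulliProduct μ p) (hp : 1 / 2 < p) (j : ℕ) :
    μ {ω | queue ω 0 = j + 1} * ENNReal.ofReal p =
      μ {ω | queue ω 0 = j} * ENNReal.ofReal (1 - p) := by
  have := hμ.1
  have hA : MeasurableSet[past 0] (Set.univ : Set (ℤ → ℤ)) := .univ
  have hbal : ∀ j : ℕ, μ {ω | queue ω 0 = j} =
      outputLaw μ Set.univ (0 + 1) j {1} + outputLaw μ Set.univ (0 + 1) j {-1} := fun j => by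
    have h := outputLaw_apply μ Set.univ (0 + 1) j Set.univ
    nth_rewrite 1 [hμ.outputLaw_eq hp] at h
    simpa [hμ.measure_queue_eq] using h.symm
  refine detailed_balance (F := fun j => μ {ω | queue ω 0 = j})
    (ofReal_add_ofReal_one_sub hμ.nonneg hμ.le_one) (fun j => measure_ne_top μ _) ?_ ?_ j
  · nth_rewrite 1 [hbal 0]
    rw [hμ.outputLaw_zero_singleton_one hp hA, hμ.outputLaw_singleton_neg_one hp hA]
    simp
  · intro j
    rw [hbal (j + 1), hμ.outputLaw_succ_singleton_one hp hA, hμ.outputLaw_singleton_neg_one hp hA]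
    simp

/-- One step of Burke's output theorem. -/
lemma outputLaw_eq_smul_coin (hμ : IsBernoulliProduct μ p) (hp : 1 / 2 < p)
    (hA : MeasurableSet[past n] A) {c : ℝ≥0∞}
    (hc : ∀ j : ℕ, μ (A ∩ {ω | queue ω n = j}) = c * μ {ω | queue ω 0 = j}) (j : ℕ) :
    outputLaw μ A (n + 1) j = (c * μ {ω | queue ω 0 = j}) • coin p := by
  have hone : outputLaw μ A (n + 1) j {1} = c * μ {ω | queue ω 0 = j} * ENNReal.ofReal p := by
    cases j with
    | zero => rw [hμ.outputLaw_zero_singleton_one hp hA, hc]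
    | succ j =>
      rw [hμ.outputLaw_succ_singleton_one hp hA, hc, mul_assoc, mul_assoc,
        hμ.measure_queue_succ_mul hp]
  have hneg : outputLaw μ A (n + 1) j {-1} =
      c * μ {ω | queue ω 0 = j} * ENNReal.ofReal (1 - p) := by
    rw [hμ.outputLaw_singleton_neg_one hp hA, hc, mul_assoc, mul_assoc,
      hμ.measure_queue_succ_mul hp]
  rw [hμ.outputLaw_eq hp, hone, hneg, coin, smul_add, smul_smul, smul_smul]

lemma measure_output_mem_Icc_inter_queue (hμ : IsBernoulliProduct μ p) (hp : 1 / 2 < p)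
    (a : ℤ) (t : ℤ → Set ℤ) {b : ℤ} (hab : a - 1 ≤ b) (j : ℕ) :
    μ ({ω | ∀ i ∈ Finset.Icc a b, output ω i ∈ t i} ∩ {ω | queue ω b = j}) =
      (∏ i ∈ Finset.Icc a b, coin p (t i)) * μ {ω | queue ω 0 = j} := by
  induction b, hab using Int.leInduction generalizing j with
  | base =>
    rw [Finset.Icc_eq_empty (by omega)]
    simp [hμ.measure_queue_eq]
  | succ b hab ih =>
    set A := {ω | ∀ i ∈ Finset.Icc a b, output ω i ∈ t i}
    have hA : MeasurableSet[past b] A :=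
      measurableSet_forall_output_mem (fun i hi => (Finset.mem_Icc.1 hi).2) t
    have hIcc : Finset.Icc a (b + 1) = insert (b + 1) (Finset.Icc a b) :=
      (Finset.insert_Icc_right_eq_Icc_add_one (by omega)).symm
    have hset : {ω | ∀ i ∈ Finset.Icc a (b + 1), output ω i ∈ t i} ∩ {ω | queue ω (b + 1) = j} =
        A ∩ {ω | queue ω (b + 1) = j ∧ output ω (b + 1) ∈ t (b + 1)} := by
      ext ω
      simp only [hIcc, Finset.mem_insert, forall_eq_or_imp, A, Set.mem_inter_iff, Set.mem_ofPred_eq]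
      tauto
    rw [hset, ← outputLaw_apply, hμ.outputLaw_eq_smul_coin hp hA ih, hIcc,
      Finset.prod_insert (by simp), Measure.smul_apply, smul_eq_mul]
    ring

lemma measure_burkeT_preimage_pi (hμ : IsBernoulliProduct μ p) (hp : 1 / 2 < p)
    (s : Finset ℤ) (t : ℤ → Set ℤ) :
    μ (burkeT ⁻¹' Set.pi s t) = ∏ i ∈ s, coin p (t i) := by
  have := hμ.1
  obtain ⟨N, hs⟩ : ∃ N : ℕ, s ⊆ Finset.Icc (-(N : ℤ)) N := ⟨s.sup Int.natAbs, fun i hi => by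
    have : i.natAbs ≤ s.sup Int.natAbs := Finset.le_sup hi
    simp only [Finset.mem_Icc]
    omega⟩
  set t' : ℤ → Set ℤ := fun i => if i ∈ s then t i else Set.univ
  have hbox : burkeT ⁻¹' Set.pi s t =ᵐ[μ]
      {ω | ∀ i ∈ Finset.Icc (-(N : ℤ)) N, output ω i ∈ t' i} := by
    filter_upwards [hμ.ae_mem_goodSet hp] with ω hω
    refine propext ?_
    change (∀ i ∈ s, burkeT ω i ∈ t i) ↔ ∀ i ∈ Finset.Icc (-(N : ℤ)) N, output ω i ∈ t' i
    simp only [burkeT_eq_output hω, t']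
    refine ⟨fun h i _ => ?_, fun h i hi => by simpa [hi] using h i (hs hi)⟩
    split_ifs with hi
    exacts [h i hi, trivial]
  have hA : MeasurableSet {ω | ∀ i ∈ Finset.Icc (-(N : ℤ)) N, output ω i ∈ t' i} :=
    past_le N _ (measurableSet_forall_output_mem (fun i hi => (Finset.mem_Icc.1 hi).2) t')
  have hlaw : ∑' j : ℕ, μ {ω | queue ω 0 = j} = 1 := by
    simpa using tsum_measure_inter_queue_eq μ .univ 0
  rw [measure_congr hbox, ← tsum_measure_inter_queue_eq μ hA N]
  simp_rw [hμ.measure_output_mem_Icc_inter_queue hp _ t' (by omega : -(N : ℤ) - 1 ≤ N)]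
  rw [ENNReal.tsum_mul_left, hlaw, mul_one, ← Finset.prod_subset hs fun i _ hi => by
    simp [t', hi, coin_univ hμ.nonneg hμ.le_one]]
  exact Finset.prod_congr rfl fun i hi => by simp [t', hi]

lemma map_burkeT (hμ : IsBernoulliProduct μ p) (hp : 1 / 2 < p) : μ.map burkeT = μ :=
  hμ.eq_of_measure_pi fun s t => by
    rw [Measure.map_apply measurable_burkeT (.pi s.countable_toSet fun _ _ => .of_discrete)]
    exact hμ.measure_burkeT_preimage_pi hp s t

end IsBernoulliProduct

theorem stmt2_general (p : ℝ) (hp : 1 / 2 < p)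
    (μ : Measure (ℤ → ℤ)) (hμ : IsBernoulliProduct μ p) :
    ∀ A : Set (ℤ → ℤ), MeasurableSet A → μ (burkeT ⁻¹' A) = μ A := by
  intro A hA
  rw [← Measure.map_apply Burke.measurable_burkeT hA, hμ.map_burkeT hp]

/-- The transformation `T`, `(Tω)ₙ = yₙ - yₙ₋₁` with `y = 2s - x`,
is measure preserving for the Bernoulli product measure: `μ ∘ T⁻¹ = μ`. -/
theorem stmt2 (p : ℝ) (hp : 1 / 2 < p) (hp1 : p < 1)
    (μ : Measure (ℤ → ℤ)) (hμ : IsBernoulliProduct μ p) :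
    ∀ A : Set (ℤ → ℤ), MeasurableSet A → μ (burkeT ⁻¹' A) = μ A :=
  stmt2_general p hp μ hμ

end
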